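/- The improper integral ∫_{0}^{∞} k·coth(k/2)·e^{−k} dk converges and equals π²/3 − 1. -/

import Mathlib

open MeasureTheory

/-- Hyperbolic cotangent, `coth x = cosh x / sinh x`. -/
noncomputable def coth (x : ℝ) : ℝ := Real.cosh x / Real.sinh x

namespace Stmt8Aux

open Set Real

lemma coth_eq {k : ℝ} (hk : 0 < k) :
    coth (k / 2) = (1 + Real.exp (-k)) / (1 - Real.exp (-k)) := by
  have h2 : Real.exp (-(k/2)) * Real.exp (-(k/2)) = Real.exp (-k) := by
    rw [← Real.exp_add]; ring_nf
  have huv : Real.exp (k/2) * Real.exp (-(k/2)) = 1 := by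
    rw [← Real.exp_add]; simp
  set u := Real.exp (k/2) with hu
  set v := Real.exp (-(k/2)) with hv
  have hv0 : 0 < v := Real.exp_pos _
  have hv1 : v < 1 := Real.exp_lt_one_iff.mpr (by linarith)
  have hu1 : 1 < u := by
    rw [hu]; exact Real.one_lt_exp_iff.mpr (by linarith)
  have hne : u - v ≠ 0 := by nlinarith
  have hne2 : 1 - v * v ≠ 0 := by nlinarith
  unfold coth
  rw [Real.cosh_eq, Real.sinh_eq, ← h2, ← hu, ← hv]
  field_simp
  rw [eq_div_iff (by nlinarith)]
  nlinarith [huv]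

lemma exp_neg_lt_one {k : ℝ} (hk : 0 < k) : Real.exp (-k) < 1 :=
  Real.exp_lt_one_iff.mpr (by linarith)

/-- terms of the series -/
noncomputable def F (n : ℕ) (k : ℝ) : ℝ :=
  (if n = 0 then (1:ℝ) else 2) * (k * Real.exp (-(((n:ℝ)+1) * k)))

lemma integrableOn_mul_exp {r : ℝ} (hr : 0 < r) :
    IntegrableOn (fun k : ℝ => k * Real.exp (-(r * k))) (Ioi 0) := by
  have h := integrableOn_rpow_mul_exp_neg_mul_rpow (s := 1) (p := 1) (b := r)
    (by norm_num) one_pos hr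
  refine h.congr_fun (fun x _ => ?_) measurableSet_Ioi
  simp [Real.rpow_one]

lemma integral_mul_exp {r : ℝ} (hr : 0 < r) :
    ∫ k in Ioi (0:ℝ), k * Real.exp (-(r * k)) = 1 / r ^ 2 := by
  have h := Real.integral_rpow_mul_exp_neg_mul_Ioi (a := 2) (r := r) two_pos hr
  rw [Real.Gamma_two, mul_one] at h
  rw [show ((2:ℝ) - 1) = 1 by norm_num] at h
  simp only [Real.rpow_one] at h
  rw [h, Real.rpow_two, div_pow, one_pow]

lemma F_integrable (n : ℕ) : IntegrableOn (F n) (Ioi 0) :=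
  (integrableOn_mul_exp (r := (n:ℝ)+1) (by positivity)).const_mul _

lemma F_integral (n : ℕ) :
    ∫ k in Ioi (0:ℝ), F n k = (if n = 0 then (1:ℝ) else 2) * (1 / ((n:ℝ)+1) ^ 2) := by
  unfold F
  rw [integral_const_mul, integral_mul_exp (by positivity)]

lemma hasSum_coeff :
    HasSum (fun n : ℕ => (if n = 0 then (1:ℝ) else 2) * (1 / ((n:ℝ)+1) ^ 2))
      (Real.pi ^ 2 / 3 - 1) := by
  have hzeta : HasSum (fun n : ℕ => (1:ℝ) / (n : ℝ) ^ 2) (Real.pi ^ 2 / 6) := hasSum_zeta_two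
  have h1 : HasSum (fun n : ℕ => (1:ℝ) / ((n:ℝ)+1) ^ 2) (Real.pi ^ 2 / 6) := by
    have := (hasSum_nat_add_iff' (f := fun n : ℕ => (1:ℝ) / (n : ℝ) ^ 2) 1).mpr hzeta
    simpa using this
  have h2 : HasSum (fun n : ℕ => (2:ℝ) * (1 / ((n:ℝ)+1) ^ 2)) (Real.pi ^ 2 / 3) := by
    rw [show Real.pi ^ 2 / 3 = 2 * (Real.pi ^ 2 / 6) by ring]
    exact h1.mul_left 2
  have h3 : HasSum (fun n : ℕ => if n = 0 then (1:ℝ) else 0) 1 := hasSum_ite_eq 0 1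
  have h4 := h2.sub h3
  have hfe : (fun n : ℕ => (2:ℝ) * (1/((n:ℝ)+1)^2) - (if n = 0 then (1:ℝ) else 0))
      = (fun n : ℕ => (if n = 0 then (1:ℝ) else 2) * (1 / ((n:ℝ)+1)^2)) := by
    funext n
    rcases n with _ | m
    · norm_num
    · simp [Nat.succ_ne_zero]
  exact hfe ▸ h4

lemma hasSum_F {k : ℝ} (hk : 0 < k) :
    HasSum (fun n => F n k) (k * coth (k / 2) * Real.exp (-k)) := by
  set q := Real.exp (-k) with hq
  have hq0 : 0 < q := Real.exp_pos _
  have hq1 : q < 1 := exp_neg_lt_one hk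
  have hgeo : HasSum (fun n : ℕ => (2*k*q) * q ^ n) (2*k*q * (1/(1-q))) := by
    simpa [div_eq_mul_inv] using (hasSum_geometric_of_lt_one hq0.le hq1).mul_left (2*k*q)
  have hite : HasSum (fun n : ℕ => if n = 0 then k*q else 0) (k*q) := hasSum_ite_eq 0 (k*q)
  have h := hgeo.sub hite
  have hfun : (fun n : ℕ => (2*k*q) * q ^ n - (if n = 0 then k*q else 0)) = fun n => F n k := by
    funext n
    have hpow : Real.exp (-(((n:ℝ)+1) * k)) = q * q ^ n := by
      rw [show -(((n:ℝ)+1) * k) = (-k) + (n:ℝ) * (-k) by ring, Real.exp_add, hq,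
        ← Real.exp_nat_mul]
    unfold F
    rcases n with _ | m
    · simp [hpow]; ring
    · simp only [Nat.succ_ne_zero, if_neg, if_false]
      rw [hpow]
      simp
      ring
  rw [hfun] at h
  suffices hs : k * coth (k / 2) * Real.exp (-k) = 2*k*q*(1/(1-q)) - k*q by rw [hs]; exact h
  rw [coth_eq hk, ← hq]
  have : 1 - q ≠ 0 := by linarith
  field_simp
  ring

lemma f_nonneg {k : ℝ} (hk : 0 < k) : 0 ≤ k * coth (k / 2) * Real.exp (-k) := by
  rw [coth_eq hk]
  have hq1 := exp_neg_lt_one hk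
  have hq0 : (0:ℝ) < Real.exp (-k) := Real.exp_pos _
  apply mul_nonneg (mul_nonneg hk.le (div_nonneg (by linarith) (by linarith))) hq0.le

lemma f_le {k : ℝ} (hk : 0 < k) :
    k * coth (k / 2) * Real.exp (-k) ≤ (k + 2) * Real.exp (-k) := by
  rw [coth_eq hk]
  set q := Real.exp (-k) with hq
  have hq0 : 0 < q := Real.exp_pos _
  have hq1 : q < 1 := exp_neg_lt_one hk
  have key : q * (k + 1) ≤ 1 := by
    have h1 : k + 1 ≤ Real.exp k := Real.add_one_le_exp k
    have h2 : q * Real.exp k = 1 := by rw [hq, ← Real.exp_add]; simp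
    nlinarith
  have hrw : k * ((1 + q) / (1 - q)) * q = (k * q * (1 + q)) / (1 - q) := by ring
  rw [hrw, div_le_iff₀ (by linarith : 0 < 1 - q)]
  nlinarith

lemma f_measurable :
    AEStronglyMeasurable (fun k : ℝ => k * coth (k / 2) * Real.exp (-k))
      (volume.restrict (Ioi 0)) := by
  apply Measurable.aestronglyMeasurable
  unfold coth
  fun_prop

lemma f_integrable : IntegrableOn (fun k : ℝ => k * coth (k / 2) * Real.exp (-k)) (Ioi 0) := by
  have hg : IntegrableOn (fun k : ℝ => (k + 2) * Real.exp (-k)) (Ioi 0) := by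
    have h1 : IntegrableOn (fun k : ℝ => k * Real.exp (-k)) (Ioi 0) := by
      have := integrableOn_mul_exp (r := 1) one_pos
      simpa using this
    have h2 : IntegrableOn (fun k : ℝ => 2 * Real.exp (-k)) (Ioi 0) := by
      have := exp_neg_integrableOn_Ioi 0 one_pos
      simpa [IntegrableOn] using this.const_mul 2
    have hsum : IntegrableOn (fun k : ℝ => k * Real.exp (-k) + 2 * Real.exp (-k)) (Ioi 0) :=
      h1.add h2
    refine hsum.congr_fun (fun x _ => ?_) measurableSet_Ioi
    ring
  refine Integrable.mono' hg f_measurable ?_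
  rw [ae_restrict_iff' measurableSet_Ioi]
  filter_upwards with k hk
  rw [Real.norm_eq_abs, abs_of_nonneg (f_nonneg hk)]
  exact f_le hk

end Stmt8Aux

open Stmt8Aux Set

theorem stmt_8 :
    IntegrableOn (fun k : ℝ => k * coth (k / 2) * Real.exp (-k)) (Set.Ioi 0) ∧
    ∫ k in Set.Ioi (0 : ℝ), k * coth (k / 2) * Real.exp (-k) = Real.pi ^ 2 / 3 - 1 := by
  refine ⟨f_integrable, ?_⟩
  have hnorm : ∀ n : ℕ, ∫ k in Ioi (0:ℝ), ‖F n k‖ = ∫ k in Ioi (0:ℝ), F n k := by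
    intro n
    refine setIntegral_congr_fun measurableSet_Ioi (fun k hk => ?_)
    rw [Real.norm_eq_abs, abs_of_nonneg]
    unfold F
    have : (0:ℝ) < k := hk
    positivity
  have hsummable : Summable fun n : ℕ => ∫ k in Ioi (0:ℝ), ‖F n k‖ := by
    simp_rw [hnorm, F_integral]
    exact hasSum_coeff.summable
  have htsum := integral_tsum_of_summable_integral_norm
    (F := F) (μ := volume.restrict (Ioi 0)) (fun n => F_integrable n) hsummable
  have heq : ∫ k in Ioi (0:ℝ), (∑' n, F n k)
      = ∫ k in Ioi (0:ℝ), k * coth (k / 2) * Real.exp (-k) := by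
    refine setIntegral_congr_fun measurableSet_Ioi (fun k hk => ?_)
    exact (hasSum_F hk).tsum_eq
  rw [← heq, ← htsum]
  simp_rw [F_integral]
  exact hasSum_coeff.tsum_eq
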